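/- Let Q_A be the Gabriel quiver of a finite-dimensional k-algebra A. If Q_A contains an oriented cycle of length at least 2 (not a loop), then A ⊗_k A is τ-tilting infinite. -/

import Mathlib

open Quiver
set_option linter.unusedSectionVars false

/-- The path algebra of a quiver `V` over a field `k`: the free `k`-module on
the set of all paths in `V`, with multiplication induced by concatenation of
paths (composable paths concatenate, non-composable products vanish). -/
abbrev PathAlgebra (k V : Type) [Field k] [Quiver.{0} V] : Type :=
  (Σ a b : V, Quiver.Path a b) →₀ k

namespace PathAlgebra

variable {k V : Type} [Field k] [Quiver.{0} V] [Fintype V] [DecidableEq V]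

/-- Transport of a path along an equality of its source. -/
def castPath {a b c : V} (h : a = b) (p : Quiver.Path b c) : Quiver.Path a c := by
  subst h; exact p

@[simp] lemma castPath_rfl {a c : V} (p : Quiver.Path a c) : castPath rfl p = p := rfl

/-- Product of two basis paths: their concatenation if they are composable,
and `0` otherwise. -/
noncomputable def mulIdx (p q : Σ a b : V, Quiver.Path a b) : PathAlgebra k V :=
  if h : p.2.1 = q.1 then
    Finsupp.single ⟨p.1, q.2.1, p.2.2.comp (castPath h q.2.2)⟩ 1
  else 0

/-- Multiplication on the path algebra, as a bilinear map. -/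
noncomputable def mulL :
    PathAlgebra k V →ₗ[k] PathAlgebra k V →ₗ[k] PathAlgebra k V :=
  Finsupp.lsum k fun p =>
    LinearMap.toSpanSingleton k _
      (Finsupp.lsum k fun q => LinearMap.toSpanSingleton k _ (mulIdx p q))

noncomputable instance : Mul (PathAlgebra k V) := ⟨fun x y => mulL x y⟩

lemma mul_def (x y : PathAlgebra k V) : x * y = mulL x y := rfl

lemma single_mul_single (p q : Σ a b : V, Quiver.Path a b) (a b : k) :
    (Finsupp.single p a * Finsupp.single q b : PathAlgebra k V)
      = (a * b) • mulIdx p q := by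
  rw [mul_def, mulL]
  simp [Finsupp.lsum_single, LinearMap.toSpanSingleton_apply, smul_smul]

noncomputable instance : One (PathAlgebra k V) :=
  ⟨∑ a : V, Finsupp.single ⟨a, a, Quiver.Path.nil⟩ 1⟩

lemma one_def : (1 : PathAlgebra k V)
    = ∑ a : V, Finsupp.single ⟨a, a, Quiver.Path.nil⟩ 1 := rfl

private lemma zero_mul' (x : PathAlgebra k V) : 0 * x = 0 := by
  rw [mul_def, map_zero]; rfl

private lemma mul_zero' (x : PathAlgebra k V) : x * 0 = 0 := by
  rw [mul_def, map_zero]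

private lemma add_mul' (x y z : PathAlgebra k V) : (x + y) * z = x * z + y * z := by
  rw [mul_def, mul_def, mul_def, map_add]; rfl

private lemma mul_add' (x y z : PathAlgebra k V) : x * (y + z) = x * y + x * z := by
  rw [mul_def, mul_def, mul_def, map_add]

private lemma smul_mul' (c : k) (x y : PathAlgebra k V) : (c • x) * y = c • (x * y) := by
  rw [mul_def, mul_def, map_smul]; rfl

private lemma mul_smul' (c : k) (x y : PathAlgebra k V) : x * (c • y) = c • (x * y) := by
  rw [mul_def, mul_def, map_smul]

private lemma mul_assoc' (x y z : PathAlgebra k V) : x * y * z = x * (y * z) := by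
  induction x using Finsupp.induction_linear with
  | zero => rw [zero_mul', zero_mul', zero_mul']
  | add f g hf hg => rw [add_mul', add_mul', add_mul', hf, hg]
  | single p xp =>
    induction y using Finsupp.induction_linear with
    | zero => rw [zero_mul', mul_zero', zero_mul']
    | add f g hf hg => rw [mul_add', add_mul', add_mul', mul_add', hf, hg]
    | single q xq =>
      induction z using Finsupp.induction_linear with
      | zero => rw [mul_zero', mul_zero', mul_zero']
      | add f g hf hg => rw [mul_add', mul_add', mul_add', hf, hg]
      | single r xr =>
        obtain ⟨a1, a2, f⟩ := p
        obtain ⟨a3, a4, g⟩ := q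
        obtain ⟨a5, a6, h⟩ := r
        rw [single_mul_single, single_mul_single, smul_mul', mul_smul']
        by_cases h12 : a2 = a3
        · subst h12
          by_cases h45 : a4 = a5
          · subst h45
            simp [mulIdx, single_mul_single, smul_smul, Quiver.Path.comp_assoc,
              mul_assoc, mul_comm, mul_left_comm]
          · simp [mulIdx, h45, single_mul_single, smul_smul, mul_zero', zero_mul']
        · by_cases h45 : a4 = a5
          · subst h45
            simp [mulIdx, h12, single_mul_single, smul_smul, mul_zero', zero_mul']
          · simp [mulIdx, h12, h45, single_mul_single, smul_smul, mul_zero', zero_mul']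

private lemma one_mul' (x : PathAlgebra k V) : 1 * x = x := by
  induction x using Finsupp.induction_linear with
  | zero => rw [mul_zero']
  | add f g hf hg => rw [mul_add', hf, hg]
  | single p xp =>
    obtain ⟨a, b, f⟩ := p
    rw [one_def, mul_def, map_sum, LinearMap.sum_apply]
    have : ∀ c : V,
        (mulL (Finsupp.single ⟨c, c, Quiver.Path.nil⟩ (1 : k)))
          (Finsupp.single ⟨a, b, f⟩ xp)
        = if c = a then Finsupp.single ⟨a, b, f⟩ xp else 0 := by
      intro c
      rw [← mul_def, single_mul_single, one_mul, mulIdx]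
      by_cases hca : c = a
      · subst hca
        simp [Quiver.Path.nil_comp, Finsupp.smul_single]
      · simp [hca]
    rw [Finset.sum_congr rfl fun c _ => this c]
    simp

private lemma mul_one' (x : PathAlgebra k V) : x * 1 = x := by
  induction x using Finsupp.induction_linear with
  | zero => rw [zero_mul']
  | add f g hf hg => rw [add_mul', hf, hg]
  | single p xp =>
    obtain ⟨a, b, f⟩ := p
    rw [one_def, mul_def, map_sum]
    have : ∀ c : V,
        (mulL (Finsupp.single ⟨a, b, f⟩ xp))
          (Finsupp.single ⟨c, c, Quiver.Path.nil⟩ (1 : k))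
        = if c = b then Finsupp.single ⟨a, b, f⟩ xp else 0 := by
      intro c
      rw [← mul_def, single_mul_single, mul_one, mulIdx]
      by_cases hcb : b = c
      · subst hcb
        simp [Finsupp.smul_single]
      · simp [hcb, Ne.symm hcb]
    rw [Finset.sum_congr rfl fun c _ => this c]
    simp

noncomputable instance instRing : Ring (PathAlgebra k V) :=
  { (inferInstanceAs (AddCommGroup (PathAlgebra k V)) : AddCommGroup (PathAlgebra k V)) with
    mul := (· * ·)
    one := 1
    mul_assoc := mul_assoc'
    one_mul := one_mul'
    mul_one := mul_one'
    left_distrib := mul_add'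
    right_distrib := add_mul'
    zero_mul := zero_mul'
    mul_zero := mul_zero' }

noncomputable instance instAlgebra : Algebra k (PathAlgebra k V) :=
  Algebra.ofModule smul_mul' mul_smul'

end PathAlgebra
/-- A brick: a (finite-dimensional) module all of whose nonzero endomorphisms
are invertible. -/
def IsBrick (A : Type) [Ring A] (M : ModuleCat.{0} A) : Prop :=
  Module.Finite A M ∧ Nontrivial M ∧ ∀ f : M →ₗ[A] M, f ≠ 0 → Function.Bijective f

/-- τ-tilting finiteness, via the Demonet–Iyama–Jasso characterization:
there are only finitely many isomorphism classes of bricks. -/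
def IsTauTiltingFinite (A : Type) [Ring A] : Prop :=
  ∃ (n : ℕ) (M : Fin n → ModuleCat.{0} A),
    ∀ N : ModuleCat.{0} A, IsBrick A N → ∃ i, Nonempty (N ≃ₗ[A] M i)

/-- `φ` presents `A` as a bound quiver algebra `kQ/I` with `I = ker φ` an
admissible ideal: `φ` is surjective, `ker φ ⊆ R_Q²` (every element of the
kernel is supported on paths of length at least `2`), and `R_Q^m ⊆ ker φ` for
some `m` (every path of length at least `m` lies in the kernel). -/
def IsAdmissiblePresentation {k V A : Type} [Field k] [Quiver.{0} V]
    [Fintype V] [DecidableEq V] [Ring A] [Algebra k A]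
    (φ : PathAlgebra k V →ₐ[k] A) : Prop :=
  Function.Surjective φ ∧
  (∀ x : PathAlgebra k V, φ x = 0 → ∀ p ∈ Finsupp.support x, 2 ≤ p.2.2.length) ∧
  ∃ m : ℕ, ∀ p : Σ a b : V, Quiver.Path a b, m ≤ p.2.2.length →
    φ (Finsupp.single p 1) = 0


/-!
A simple cycle `w 0 ⟶ w 1 ⟶ ⋯ ⟶ w (N - 1) ⟶ w 0` with `N ≥ 2` in the quiver `Q` of `A`
(extracted from any closed walk through two distinct vertices) produces, in the quiver `Q × Q`
of `A ⊗ A`, a cycle of length `2N` through the distinct vertices `(w a, w (-a))` and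
`(w a, w (1 - a))`, whose arrows alternate between arrows `γ ⊗ 1` and `1 ⊗ γ` and change
orientation at every vertex. Its band modules `M t` (one-dimensional at each vertex of the cycle,
every arrow acting by `1` except one, which acts by `t ∈ k`) are modules over the
radical-square-zero quotient of `A ⊗ A`. A homomorphism `M t → M s` is diagonal, because the
vertex idempotents separate the basis vectors, and then constant along the cycle: it is a scalar
`β` with `t β = s β`. So the `M t` are pairwise non-isomorphic bricks, infinitely many since `k`
is infinite.
-/

lemma ZMod.apply_eq_apply_one {N : ℕ} [NeZero N] {α : Type*} {g : ZMod N → α}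
    (hg : ∀ a ≠ 0, g (a + 1) = g a) (a : ZMod N) : g a = g 1 := by
  have key : ∀ n : ℕ, g (1 + n) = g 1 := by
    intro n
    induction n with
    | zero => simp
    | succ n ih =>
      rw [Nat.cast_succ, ← add_assoc]
      by_cases h : 1 + (n : ZMod N) = 0
      · rw [h, zero_add]
      · rw [hg _ h, ih]
  simpa using key (a - 1).val

namespace Quiver

structure SimpleCycle (V : Type*) [Quiver V] (N : ℕ) where
  vertex : ZMod N → V
  injective : Function.Injective vertex
  arrow : ∀ i, vertex i ⟶ vertex (i + 1)

namespace Path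

variable {V : Type*} [Quiver V]

lemma getElem_vertices_length {a b : V} (p : Path a b) :
    p.vertices[p.length]'(by simp) = b := by
  have h := p.vertices_getLast
  rw [List.getLast_eq_getElem] at h
  simpa using h

lemma nonempty_hom_getElem_vertices {a b : V} (p : Path a b) {n : ℕ} (hn : n < p.length) :
    Nonempty (p.vertices[n]'(by simp; omega) ⟶ p.vertices[n + 1]'(by simp; omega)) := by
  induction p with
  | nil => simp at hn
  | cons p e ih =>
    rw [length_cons] at hn
    simp only [vertices_cons, List.concat_eq_append]
    rcases Nat.lt_or_ge n p.length with h | h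
    · rw [List.getElem_append_left (by simp; omega), List.getElem_append_left (by simp; omega)]
      exact ih h
    · obtain rfl : n = p.length := by omega
      rw [List.getElem_append_left (by simp), List.getElem_append_right (by simp)]
      simpa [getElem_vertices_length] using ⟨e⟩

lemma exists_eq_comp_comp_of_getElem_vertices_eq {a b : V} (p : Path a b) {i j : ℕ}
    (hij : i < j) (hj : j < p.vertices.length)
    (h : p.vertices[i] = p.vertices[j]) :
    ∃ (c : V) (p₁ : Path a c) (p₂ : Path c c) (p₃ : Path c b),
      p = p₁.comp (p₂.comp p₃) ∧ p₁.length = i ∧ p₂.length = j - i := by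
  obtain ⟨c, q, p₃, rfl, hq, hc⟩ := p.exists_eq_comp_and_length_eq_of_lt_length j hj
  obtain ⟨d, p₁, p₂, rfl, hp₁, hd⟩ :=
    q.exists_eq_comp_and_length_eq_of_lt_length i (by simp; omega)
  have hdc : d = c := by
    refine hd.trans (Eq.trans ?_ (h.trans hc.symm))
    simp only [vertices_comp (p₁.comp p₂) p₃]
    rw [List.getElem_append_left (by simp only [List.length_dropLast, vertices_length]; omega),
      List.getElem_dropLast]
  subst hdc
  refine ⟨d, p₁, p₂, p₃, comp_assoc .., hp₁, ?_⟩
  have := length_comp p₁ p₂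
  omega

lemma mem_vertices_comp_comp_iff {a b c v : V} {p₁ : Path a c} {p₂ : Path c c}
    {p₃ : Path c b} :
    v ∈ (p₁.comp (p₂.comp p₃)).vertices ↔ v ∈ (p₁.comp p₃).vertices ∨ v ∈ p₂.vertices := by
  rw [← p₂.dropLast_append_end_eq]
  have hc := p₃.start_mem_vertices
  simp only [vertices_comp, List.mem_append, List.mem_singleton]
  constructor
  · rintro (h | h | h) <;> simp [h]
  · rintro ((h | h) | h | rfl) <;> simp_all

lemma two_le_length_of_mem_vertices {c v : V} (r : Path c c) (hv : v ∈ r.vertices)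
    (hvc : v ≠ c) : 2 ≤ r.length := by
  match r with
  | nil => simp_all
  | cons nil _ => simp_all
  | cons (cons _ _) _ => simp

section vertexMod

variable {c : V} (r : Path c c) [NeZero r.length]

def vertexMod (i : ZMod r.length) : V :=
  r.vertices[i.val]'(by simp; exact i.val_lt.le)

lemma vertexMod_add_one (i : ZMod r.length) :
    r.vertexMod (i + 1) = r.vertices[i.val + 1]'(by simp; exact i.val_lt) := by
  have hi := i.val_lt
  simp only [vertexMod, ZMod.val_add, ZMod.val_one_eq_one_mod, Nat.add_mod_mod]
  rcases Nat.lt_or_ge (i.val + 1) r.length with h | h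
  · simp only [Nat.mod_eq_of_lt h]
  · have hN : i.val + 1 = r.length := by omega
    simp only [hN, Nat.mod_self, getElem_vertices_zero, getElem_vertices_length]

noncomputable def toSimpleCycle (hr : Function.Injective r.vertexMod) :
    SimpleCycle V r.length where
  vertex := r.vertexMod
  injective := hr
  arrow i := (r.vertexMod_add_one i).symm ▸
    (r.nonempty_hom_getElem_vertices i.val_lt).some

end vertexMod

theorem exists_simpleCycle_of_mem_vertices {c : V} (r : Path c c) {v : V}
    (hv : v ∈ r.vertices) (hvc : v ≠ c) : ∃ N, 2 ≤ N ∧ Nonempty (SimpleCycle V N) := by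
  induction hN : r.length using Nat.strong_induction_on generalizing c v with
  | _ N ih =>
  have h2 := r.two_le_length_of_mem_vertices hv hvc
  have : NeZero r.length := ⟨by omega⟩
  by_cases hinj : Function.Injective r.vertexMod
  · exact ⟨N, hN ▸ h2, hN ▸ ⟨r.toSimpleCycle hinj⟩⟩
  obtain ⟨i, j, hij, hne⟩ : ∃ i j, r.vertexMod i = r.vertexMod j ∧ i.val < j.val := by
    simp only [Function.Injective, not_forall] at hinj
    obtain ⟨i, j, hij, hne⟩ := hinj
    rcases lt_or_gt_of_ne (ZMod.val_injective _ |>.ne hne) with h | h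
    · exact ⟨i, j, hij, h⟩
    · exact ⟨j, i, hij.symm, h⟩
  obtain ⟨d, r₁, r₂, r₃, rfl, hr₁, hr₂⟩ :=
    r.exists_eq_comp_comp_of_getElem_vertices_eq hne (by simp; exact j.val_lt.le) hij
  have hj := j.val_lt
  simp only [length_comp] at hN hj
  by_cases hd : ∀ u ∈ r₂.vertices, u = d
  · have hv' : v ∈ (r₁.comp r₃).vertices := by
      rcases mem_vertices_comp_comp_iff.1 hv with h | h
      · exact h
      · rw [hd v h, vertices_comp]
        exact List.mem_append_right _ (start_mem_vertices r₃)
    exact ih (r₁.comp r₃).length (by simp only [length_comp]; omega) _ hv' hvc rfl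
  · obtain ⟨u, hu, hud⟩ : ∃ u ∈ r₂.vertices, u ≠ d := by simpa using hd
    exact ih r₂.length (by omega) r₂ hu hud rfl

theorem exists_simpleCycle_of_ne {a b : V} (hab : a ≠ b) (p : Path a b) (q : Path b a) :
    ∃ N, 2 ≤ N ∧ Nonempty (SimpleCycle V N) :=
  (p.comp q).exists_simpleCycle_of_mem_vertices
    (by rw [vertices_comp]; exact List.mem_append_right _ (start_mem_vertices q)) hab.symm

end Path
end Quiver

namespace PathAlgebra

variable {V : Type} {E : Type*} [Quiver.{0} V] [Fintype V] [DecidableEq V] [Ring E]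

structure LiftData (V : Type) (E : Type*) [Quiver.{0} V] [Fintype V] [DecidableEq V] [Ring E] where
  idem : V → E
  arrow : ∀ ⦃c c' : V⦄, (c ⟶ c') → E
  idem_mul_idem : ∀ c d, idem c * idem d = if c = d then idem c else 0
  sum_idem : ∑ c, idem c = 1
  idem_mul_arrow : ∀ ⦃c c' : V⦄ (δ : c ⟶ c'), idem c * arrow δ = arrow δ
  arrow_mul_idem : ∀ ⦃c c' : V⦄ (δ : c ⟶ c'), arrow δ * idem c' = arrow δ

namespace LiftData

variable (D : LiftData V E)

def path : ∀ {a b : V}, Path a b → E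
  | a, _, .nil => D.idem a
  | _, _, .cons p δ => path p * D.arrow δ

@[simp] lemma path_nil (a : V) : D.path (Path.nil : Path a a) = D.idem a := by
  rw [path]

@[simp] lemma path_cons {a b c : V} (p : Path a b) (δ : b ⟶ c) :
    D.path (p.cons δ) = D.path p * D.arrow δ := by
  rw [path]

lemma path_toPath {a b : V} (δ : a ⟶ b) : D.path δ.toPath = D.arrow δ := by
  rw [Quiver.Hom.toPath, path_cons, path_nil, D.idem_mul_arrow]

lemma path_mul_idem {a b : V} (p : Path a b) : D.path p * D.idem b = D.path p := by
  cases p with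
  | nil => rw [path_nil, D.idem_mul_idem, if_pos rfl]
  | cons p δ => rw [path_cons, mul_assoc, D.arrow_mul_idem]

lemma idem_mul_path {a b : V} (c : V) (p : Path a b) :
    D.idem c * D.path p = if c = a then D.path p else 0 := by
  induction p with
  | nil => rw [path_nil, D.idem_mul_idem]; split_ifs <;> simp_all
  | cons p δ ih => rw [path_cons, ← mul_assoc, ih]; split_ifs <;> simp

lemma path_comp {a b c : V} (p : Path a b) (q : Path b c) :
    D.path (p.comp q) = D.path p * D.path q := by
  induction q with
  | nil => rw [Path.comp_nil, path_nil, path_mul_idem]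
  | cons q δ ih => rw [Path.comp_cons, path_cons, path_cons, ih, mul_assoc]

lemma path_mul_path_of_ne {a b a' b' : V} (p : Path a b) (q : Path a' b') (h : b ≠ a') :
    D.path p * D.path q = 0 := by
  rw [← D.path_mul_idem p, mul_assoc, D.idem_mul_path, if_neg h, mul_zero]

def IsRadSquareZero : Prop :=
  ∀ ⦃c c' d d' : V⦄ (δ : c ⟶ c') (δ' : d ⟶ d'), D.arrow δ * D.arrow δ' = 0

def generators : Set E :=
  {e | (∃ c, D.idem c = e) ∨ ∃ (c c' : V) (δ : c ⟶ c'), D.arrow δ = e}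

lemma path_eq_zero_of_two_le_length (hD : D.IsRadSquareZero)
    {a b : V} (p : Path a b) (hp : 2 ≤ p.length) : D.path p = 0 := by
  match p with
  | .cons (.cons p δ) δ' => rw [path_cons, path_cons, mul_assoc, hD, mul_zero]

variable (k : Type) [Field k] [Algebra k E]

noncomputable def lift : PathAlgebra k V →ₐ[k] E :=
  AlgHom.ofLinearMap (Finsupp.linearCombination k fun P => D.path P.2.2)
    (by simp [PathAlgebra.one_def, ← D.sum_idem])
    (by
      intro x y
      induction x using Finsupp.induction_linear with
      | zero => rw [zero_mul', map_zero, zero_mul]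
      | add x x' hx hx' => rw [add_mul', map_add, map_add, hx, hx', add_mul]
      | single P a =>
        induction y using Finsupp.induction_linear with
        | zero => rw [mul_zero', map_zero, mul_zero]
        | add y y' hy hy' => rw [mul_add', map_add, map_add, hy, hy', mul_add]
        | single Q b =>
          obtain ⟨a₁, a₂, p⟩ := P
          obtain ⟨a₃, a₄, q⟩ := Q
          rw [single_mul_single, map_smul, Finsupp.linearCombination_single,
            Finsupp.linearCombination_single, smul_mul_smul_comm, mulIdx]
          by_cases h : a₂ = a₃
          · subst h
            simp [path_comp]
          · simp [h, path_mul_path_of_ne _ _ _ h])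

@[simp] lemma lift_single (P : Σ a b : V, Path a b) (a : k) :
    D.lift k (Finsupp.single P a) = a • D.path P.2.2 :=
  Finsupp.linearCombination_single k _ _

lemma lift_eq_zero (hD : D.IsRadSquareZero)
    {x : PathAlgebra k V} (hx : ∀ P ∈ x.support, 2 ≤ P.2.2.length) : D.lift k x = 0 := by
  rw [← Finsupp.sum_single x, map_finsuppSum]
  refine Finset.sum_eq_zero fun P hP => ?_
  dsimp only
  rw [lift_single, D.path_eq_zero_of_two_le_length hD _ (hx P hP), smul_zero]

lemma path_mem_adjoin {a b : V} (p : Path a b) : D.path p ∈ Algebra.adjoin k D.generators := by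
  induction p with
  | nil => exact Algebra.subset_adjoin (Or.inl ⟨_, (path_nil D _).symm⟩)
  | cons p δ ih =>
    rw [path_cons]
    exact Subalgebra.mul_mem _ ih (Algebra.subset_adjoin (Or.inr ⟨_, _, δ, rfl⟩))

lemma lift_mem_adjoin (x : PathAlgebra k V) : D.lift k x ∈ Algebra.adjoin k D.generators := by
  induction x using Finsupp.induction_linear with
  | zero => rw [map_zero]; exact Subalgebra.zero_mem _
  | add x y hx hy => rw [map_add]; exact Subalgebra.add_mem _ hx hy
  | single P a => rw [lift_single]; exact Subalgebra.smul_mem _ (D.path_mem_adjoin k _) a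

lemma commute_lift {D' : LiftData V E}
    (h : ∀ e ∈ D.generators, ∀ e' ∈ D'.generators, Commute e e') (x y : PathAlgebra k V) :
    Commute (D.lift k x) (D'.lift k y) :=
  Algebra.commute_of_mem_adjoin_of_forall_mem_commute (D'.lift_mem_adjoin k y) fun e' he' =>
    (Algebra.commute_of_mem_adjoin_of_forall_mem_commute (D.lift_mem_adjoin k x) fun e he =>
      (h e he e' he').symm).symm

variable {A : Type*} [Ring A] [Algebra k A] (φ : PathAlgebra k V →ₐ[k] A)
  (hφ : Function.Surjective φ)
  (hker : ∀ x, φ x = 0 → ∀ P ∈ x.support, 2 ≤ P.2.2.length) {D} (hD : D.IsRadSquareZero)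

noncomputable def descend : A →ₐ[k] E :=
  (Ideal.Quotient.liftₐ (RingHom.ker φ) (D.lift k) fun x hx =>
    D.lift_eq_zero k hD (hker x hx)).comp (Ideal.quotientKerAlgEquivOfSurjective hφ).symm.toAlgHom

lemma descend_apply (x : PathAlgebra k V) : descend k φ hφ hker hD (φ x) = D.lift k x := by
  rw [descend, AlgHom.comp_apply, AlgEquiv.toAlgHom_apply,
    Ideal.quotientKerAlgEquivOfSurjective_symm_apply, Ideal.Quotient.liftₐ_apply]
  rfl

end LiftData
end PathAlgebra

lemma Matrix.commute_diagonal_of_apply_ne_zero {R X : Type*} [CommSemiring R] [Fintype X]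
    [DecidableEq X] {d : X → R} {M : Matrix X X R} (h : ∀ x y, M x y ≠ 0 → d x = d y) :
    Commute (diagonal d) M := by
  ext x y
  rw [diagonal_mul, mul_diagonal]
  by_cases hxy : M x y = 0
  · simp [hxy]
  · rw [h x y hxy, mul_comm]

namespace PathAlgebra.LiftData

open Matrix

variable {V X : Type} (k : Type) [Field k] [Quiver.{0} V] [Fintype V] [DecidableEq V]
  [Fintype X] [DecidableEq X]

noncomputable def ofMatrix (ν : X → V) (M : ∀ ⦃c c' : V⦄, (c ⟶ c') → Matrix X X k)
    (hM : ∀ ⦃c c' : V⦄ (δ : c ⟶ c') x y, M δ x y ≠ 0 → ν x = c ∧ ν y = c') :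
    LiftData V (Matrix X X k) where
  idem c := diagonal fun x => if ν x = c then 1 else 0
  arrow := M
  idem_mul_idem c d := by
    rw [diagonal_mul_diagonal]
    split_ifs with h
    · subst h; congr 1; ext x; split_ifs <;> simp
    · rw [← diagonal_zero]; congr 1; ext x; split_ifs <;> simp_all
  sum_idem := by
    ext x y
    rw [Matrix.sum_apply, one_apply]
    by_cases h : x = y <;> simp [h]
  idem_mul_arrow c c' δ := by
    ext x y
    rw [diagonal_mul]
    by_cases h : M δ x y = 0
    · simp [h]
    · simp [(hM δ x y h).1]
  arrow_mul_idem c c' δ := by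
    ext x y
    rw [mul_diagonal]
    by_cases h : M δ x y = 0
    · simp [h]
    · simp [(hM δ x y h).2]

end PathAlgebra.LiftData

namespace Quiver.SimpleCycle

open Matrix PathAlgebra

variable {V : Type} [Quiver.{0} V] {N : ℕ} (C : SimpleCycle V N)

def IsArrow (a : ZMod N) {c c' : V} (δ : c ⟶ c') : Prop :=
  (⟨c, c', δ⟩ : Σ u v : V, u ⟶ v) = ⟨_, _, C.arrow a⟩

lemma isArrow_arrow_iff (a b : ZMod N) : C.IsArrow a (C.arrow b) ↔ a = b := by
  refine ⟨fun h => C.injective (congrArg Sigma.fst h).symm, ?_⟩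
  rintro rfl
  rfl

lemma IsArrow.source_eq {a : ZMod N} {c c' : V} {δ : c ⟶ c'} (h : C.IsArrow a δ) :
    c = C.vertex a :=
  congrArg Sigma.fst h

lemma IsArrow.target_eq {a : ZMod N} {c c' : V} {δ : c ⟶ c'} (h : C.IsArrow a δ) :
    c' = C.vertex (a + 1) :=
  congrArg (fun s => s.2.1) h

variable {k X : Type} [Field k] [DecidableEq X] [NeZero N]

variable (k) in
open Classical in
noncomputable def arrowMatrix (row col : ZMod N → X) (wt : ZMod N → k) {c c' : V}
    (δ : c ⟶ c') : Matrix X X k :=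
  ∑ a, if C.IsArrow a δ then single (row a) (col a) (wt a) else 0

lemma arrowMatrix_arrow (row col : ZMod N → X) (wt : ZMod N → k) (a : ZMod N) :
    C.arrowMatrix k row col wt (C.arrow a) = single (row a) (col a) (wt a) := by
  classical
  simp only [arrowMatrix, isArrow_arrow_iff, Finset.sum_ite_eq', Finset.mem_univ, if_true]

lemma exists_isArrow_of_arrowMatrix_apply_ne_zero {row col : ZMod N → X} {wt : ZMod N → k}
    {c c' : V} {δ : c ⟶ c'} {x y : X} (h : C.arrowMatrix k row col wt δ x y ≠ 0) :
    ∃ a, C.IsArrow a δ ∧ row a = x ∧ col a = y := by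
  classical
  simp only [arrowMatrix, Matrix.sum_apply] at h
  obtain ⟨a, -, ha⟩ := Finset.exists_ne_zero_of_sum_ne_zero h
  by_cases harr : C.IsArrow a δ
  · rw [if_pos harr, single_apply] at ha
    by_cases hxy : row a = x ∧ col a = y
    · exact ⟨a, harr, hxy⟩
    · simp [hxy] at ha
  · simp [harr] at ha

variable [Fintype X]

lemma arrowMatrix_mul_arrowMatrix {row col row' col' : ZMod N → X} {wt wt' : ZMod N → k}
    (h : ∀ a b, col a ≠ row' b) {c c' d d' : V} (δ : c ⟶ c') (δ' : d ⟶ d') :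
    C.arrowMatrix k row col wt δ * C.arrowMatrix k row' col' wt' δ' = 0 := by
  classical
  simp only [arrowMatrix, Finset.sum_mul, Finset.mul_sum]
  refine Finset.sum_eq_zero fun a _ => Finset.sum_eq_zero fun b _ => ?_
  split_ifs <;> simp [single_mul_single_of_ne _ _ _ _ (h b a)]

variable [DecidableEq V]

lemma commute_diagonal_arrowMatrix {ν : X → V} {row col : ZMod N → X} (wt : ZMod N → k)
    (hν : ∀ a, ν (row a) = ν (col a)) (c : V) {d d' : V} (δ : d ⟶ d') :
    Commute (diagonal fun x => if ν x = c then (1 : k) else 0)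
      (C.arrowMatrix k row col wt δ) := by
  refine commute_diagonal_of_apply_ne_zero fun x y h => ?_
  obtain ⟨a, -, rfl, rfl⟩ := C.exists_isArrow_of_arrowMatrix_apply_ne_zero h
  rw [hν]

variable [Fintype V]

variable (k) in
noncomputable def cycleData (ν : X → V) (row col : ZMod N → X) (wt : ZMod N → k)
    (hrow : ∀ a, ν (row a) = C.vertex a) (hcol : ∀ a, ν (col a) = C.vertex (a + 1)) :
    LiftData V (Matrix X X k) :=
  LiftData.ofMatrix k ν (fun _ _ δ => C.arrowMatrix k row col wt δ) fun _ _ δ x y h => by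
    obtain ⟨a, ha, rfl, rfl⟩ := C.exists_isArrow_of_arrowMatrix_apply_ne_zero h
    exact ⟨(hrow a).trans (ha.source_eq).symm, (hcol a).trans (ha.target_eq).symm⟩

variable {ν : X → V} {row col : ZMod N → X} {wt : ZMod N → k}
  {hrow : ∀ a, ν (row a) = C.vertex a} {hcol : ∀ a, ν (col a) = C.vertex (a + 1)}

lemma cycleData_isRadSquareZero (h : ∀ a b, col a ≠ row b) :
    (C.cycleData k ν row col wt hrow hcol).IsRadSquareZero :=
  fun _ _ _ _ δ δ' => C.arrowMatrix_mul_arrowMatrix h δ δ'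

lemma commute_of_mem_generators_cycleData {ν' : X → V} {row' col' : ZMod N → X}
    {wt' : ZMod N → k} {hrow' : ∀ a, ν' (row' a) = C.vertex a}
    {hcol' : ∀ a, ν' (col' a) = C.vertex (a + 1)}
    (hcr : ∀ a b, col a ≠ row' b) (hrc : ∀ a b, col' a ≠ row b)
    (hν : ∀ a, ν (row' a) = ν (col' a)) (hν' : ∀ a, ν' (row a) = ν' (col a)) :
    ∀ e ∈ (C.cycleData k ν row col wt hrow hcol).generators,
      ∀ e' ∈ (C.cycleData k ν' row' col' wt' hrow' hcol').generators, Commute e e' := by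
  rintro _ (⟨c, rfl⟩ | ⟨c, c', δ, rfl⟩) _ (⟨d, rfl⟩ | ⟨d, d', δ', rfl⟩)
  · exact commute_diagonal _ _
  · exact C.commute_diagonal_arrowMatrix wt' hν c δ'
  · exact (C.commute_diagonal_arrowMatrix wt hν' d δ).symm
  · exact (C.arrowMatrix_mul_arrowMatrix hcr δ δ').trans
      (C.arrowMatrix_mul_arrowMatrix hrc δ' δ).symm

end Quiver.SimpleCycle

section MatrixModule

open Matrix

variable {k B X : Type} [Field k] [Ring B] [Algebra k B] [Fintype X] [DecidableEq X]
  (ρ : B →ₐ[k] Matrix X X k)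

noncomputable abbrev matrixModule : ModuleCat B :=
  (ModuleCat.restrictScalars ρ.toRingHom).obj (ModuleCat.of (Matrix X X k) (X → k))

noncomputable instance : Module k (matrixModule ρ) := inferInstanceAs (Module k (X → k))

instance : IsScalarTower k B (matrixModule ρ) := ⟨fun c b (v : X → k) => by
  change ρ (c • b) *ᵥ v = c • ρ b *ᵥ v
  rw [map_smul, smul_mulVec]⟩

instance : Module.Finite B (matrixModule ρ) :=
  have : Module.Finite k (matrixModule ρ) := inferInstanceAs (Module.Finite k (X → k))
  Module.Finite.of_restrictScalars_finite k B _

instance [Nonempty X] : Nontrivial (matrixModule ρ) := inferInstanceAs (Nontrivial (X → k))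

variable {ρ} {ρ' : B →ₐ[k] Matrix X X k}

lemma toMatrix'_mul_eq_mul_toMatrix' (f : matrixModule ρ →ₗ[B] matrixModule ρ') (b : B) :
    LinearMap.toMatrix' (f.restrictScalars k) * ρ b =
      ρ' b * LinearMap.toMatrix' (f.restrictScalars k) := by
  have hf : Matrix.toLin' (LinearMap.toMatrix' (f.restrictScalars k)) = f.restrictScalars k :=
    Matrix.toLin'_toMatrix' _
  refine Matrix.toLin'.injective (LinearMap.ext fun v => ?_)
  rw [Matrix.toLin'_mul, Matrix.toLin'_mul, LinearMap.comp_apply, LinearMap.comp_apply, hf]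
  exact f.map_smul b v

lemma apply_eq_smul_of_toMatrix'_eq {f : matrixModule ρ →ₗ[B] matrixModule ρ'} {β : k}
    (hf : LinearMap.toMatrix' (f.restrictScalars k) = β • 1) (v : matrixModule ρ) :
    f v = β • v := by
  have h := Matrix.toLin'_toMatrix' (f.restrictScalars k)
  rw [hf, map_smul, Matrix.toLin'_one] at h
  exact (LinearMap.congr_fun h v).symm

lemma isBrick_matrixModule [Nonempty X]
    (hρ : ∀ F : Matrix X X k, (∀ b, F * ρ b = ρ b * F) → ∃ β : k, F = β • 1) :
    IsBrick B (matrixModule ρ) := by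
  refine ⟨inferInstance, inferInstance, fun f hf => ?_⟩
  obtain ⟨β, hβ⟩ := hρ _ (toMatrix'_mul_eq_mul_toMatrix' f)
  have hfβ := apply_eq_smul_of_toMatrix'_eq hβ
  have hβ0 : β ≠ 0 := by
    rintro rfl
    exact hf (LinearMap.ext fun v => by rw [hfβ, zero_smul, LinearMap.zero_apply])
  refine ⟨fun v w h => ?_, fun v => ⟨β⁻¹ • v, ?_⟩⟩
  · rw [hfβ, hfβ] at h
    exact smul_right_injective _ hβ0 h
  · rw [hfβ, smul_smul, mul_inv_cancel₀ hβ0, one_smul]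

lemma isEmpty_linearEquiv_matrixModule [Nonempty X]
    (hρ : ∀ F : Matrix X X k, (∀ b, F * ρ b = ρ' b * F) → F = 0) :
    IsEmpty (matrixModule ρ ≃ₗ[B] matrixModule ρ') := by
  refine ⟨fun e => ?_⟩
  have he := apply_eq_smul_of_toMatrix'_eq
    ((hρ _ (toMatrix'_mul_eq_mul_toMatrix' e.toLinearMap)).trans (zero_smul k 1).symm)
  obtain ⟨v, hv⟩ := exists_ne (0 : matrixModule ρ)
  exact hv (e.injective ((he v).trans ((zero_smul k v).trans e.map_zero.symm)))

end MatrixModule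

theorem not_isTauTiltingFinite_of_bricks {B ι : Type} [Ring B] [Infinite ι]
    (M : ι → ModuleCat.{0} B) (hM : ∀ i, IsBrick B (M i))
    (hne : Pairwise fun i j => IsEmpty (M i ≃ₗ[B] M j)) : ¬ IsTauTiltingFinite B := by
  rintro ⟨n, L, hL⟩
  choose idx hidx using fun i => hL (M i) (hM i)
  obtain ⟨i, j, hij, hidx_eq⟩ := Finite.exists_ne_map_eq_of_infinite idx
  obtain ⟨ei⟩ := hidx i
  obtain ⟨ej⟩ := hidx j
  rw [hidx_eq] at ei
  exact (hne hij).false (ei.trans ej.symm)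

namespace Quiver.SimpleCycle

open Matrix PathAlgebra TensorProduct

variable {V : Type} [Quiver.{0} V] {N : ℕ} (C : SimpleCycle V N)

/- The basis vector `(true, a)` receives the arrow `γ a ⊗ 1` from `(false, a + 1)` and the arrow
`1 ⊗ γ (-a)` from `(false, a)`, so the `2N` basis vectors form the zigzag cycle. -/
def bandVertex : Bool × ZMod N → V × V
  | (false, a) => (C.vertex a, C.vertex (1 - a))
  | (true, a) => (C.vertex a, C.vertex (-a))

lemma bandVertex_injective (hN : (1 : ZMod N) ≠ 0) : Function.Injective C.bandVertex := by
  rintro ⟨_ | _, a⟩ ⟨_ | _, b⟩ h <;> simp only [bandVertex, Prod.mk.injEq] at h <;>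
    obtain ⟨hab, h'⟩ := h <;> obtain rfl := C.injective hab
  · rfl
  · exact absurd (by linear_combination C.injective h') hN
  · exact absurd (by linear_combination -C.injective h') hN
  · rfl

variable {k : Type} [Field k] [Fintype V] [DecidableEq V] [NeZero N]

variable (k) in
noncomputable def leftData : LiftData V (Matrix (Bool × ZMod N) (Bool × ZMod N) k) :=
  C.cycleData k (fun x => (C.bandVertex x).1) (fun a => (true, a)) (fun a => (false, a + 1)) 1
    (fun _ => rfl) (fun _ => rfl)

noncomputable def rightData (t : k) : LiftData V (Matrix (Bool × ZMod N) (Bool × ZMod N) k) :=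
  C.cycleData k (fun x => (C.bandVertex x).2) (fun a => (true, -a)) (fun a => (false, -a))
    (fun a => if a = 0 then t else 1) (fun a => by simp [bandVertex])
    (fun a => by simp only [bandVertex, sub_neg_eq_add, add_comm])

lemma leftData_isRadSquareZero : (C.leftData k).IsRadSquareZero :=
  C.cycleData_isRadSquareZero (by simp)

lemma rightData_isRadSquareZero (t : k) : (C.rightData t).IsRadSquareZero :=
  C.cycleData_isRadSquareZero (by simp)

lemma commute_leftData_rightData (t : k) :
    ∀ e ∈ (C.leftData k).generators, ∀ e' ∈ (C.rightData t).generators, Commute e e' :=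
  C.commute_of_mem_generators_cycleData (by simp) (by simp) (fun a => rfl)
    (fun a => by simp only [bandVertex]; ring_nf)

variable {A : Type} [Ring A] [Algebra k A] (φ : PathAlgebra k V →ₐ[k] A)
  (hφ : Function.Surjective φ)
  (hker : ∀ x, φ x = 0 → ∀ P ∈ x.support, 2 ≤ P.2.2.length)

noncomputable def bandRep (t : k) :
    A ⊗[k] A →ₐ[k] Matrix (Bool × ZMod N) (Bool × ZMod N) k :=
  Algebra.TensorProduct.lift ((C.leftData k).descend k φ hφ hker C.leftData_isRadSquareZero)
    ((C.rightData t).descend k φ hφ hker (C.rightData_isRadSquareZero t)) fun x y => by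
      obtain ⟨x, rfl⟩ := hφ x
      obtain ⟨y, rfl⟩ := hφ y
      rw [LiftData.descend_apply, LiftData.descend_apply]
      exact (C.leftData k).commute_lift k (C.commute_leftData_rightData t) x y

lemma bandRep_tmul (t : k) (x y : PathAlgebra k V) :
    C.bandRep φ hφ hker t (φ x ⊗ₜ φ y) =
      (C.leftData k).lift k x * (C.rightData t).lift k y := by
  rw [bandRep, Algebra.TensorProduct.lift_tmul, LiftData.descend_apply, LiftData.descend_apply]

lemma bandRep_idem_tmul_idem (t : k) (c d : V) :
    C.bandRep φ hφ hker t
      (φ (Finsupp.single ⟨c, c, .nil⟩ 1) ⊗ₜ φ (Finsupp.single ⟨d, d, .nil⟩ 1)) =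
      diagonal fun x => if C.bandVertex x = (c, d) then 1 else 0 := by
  rw [bandRep_tmul, LiftData.lift_single, LiftData.lift_single, one_smul, one_smul,
    LiftData.path_nil, LiftData.path_nil]
  simp only [leftData, rightData, cycleData, LiftData.ofMatrix, diagonal_mul_diagonal,
    Prod.ext_iff, ite_zero_mul_ite_zero, one_mul]

lemma bandRep_arrow_tmul_one (t : k) (a : ZMod N) :
    C.bandRep φ hφ hker t (φ (Finsupp.single ⟨_, _, (C.arrow a).toPath⟩ 1) ⊗ₜ 1) =
      single (true, a) (false, a + 1) 1 := by
  rw [← map_one φ, bandRep_tmul, map_one, mul_one, LiftData.lift_single, one_smul,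
    LiftData.path_toPath]
  exact C.arrowMatrix_arrow _ _ _ a

lemma bandRep_one_tmul_arrow (t : k) (a : ZMod N) :
    C.bandRep φ hφ hker t (1 ⊗ₜ φ (Finsupp.single ⟨_, _, (C.arrow a).toPath⟩ 1)) =
      single (true, -a) (false, -a) (if a = 0 then t else 1) := by
  rw [← map_one φ, bandRep_tmul, map_one, one_mul, LiftData.lift_single, one_smul,
    LiftData.path_toPath]
  exact C.arrowMatrix_arrow _ _ _ a

variable {t s : k} {F : Matrix (Bool × ZMod N) (Bool × ZMod N) k}
  (hF : ∀ b, F * C.bandRep φ hφ hker t b = C.bandRep φ hφ hker s b * F)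
include hF

lemma apply_eq_zero_of_mul_bandRep_eq (hN : (1 : ZMod N) ≠ 0) {x y : Bool × ZMod N}
    (hxy : x ≠ y) : F x y = 0 := by
  have h := congr_fun₂ (hF (φ (Finsupp.single ⟨(C.bandVertex y).1, _, .nil⟩ 1) ⊗ₜ
    φ (Finsupp.single ⟨(C.bandVertex y).2, _, .nil⟩ 1))) x y
  rw [bandRep_idem_tmul_idem, bandRep_idem_tmul_idem, mul_diagonal, diagonal_mul] at h
  simpa [(C.bandVertex_injective hN).ne hxy] using h

theorem exists_eq_smul_one_of_mul_bandRep_eq (hN : (1 : ZMod N) ≠ 0) :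
    ∃ β : k, F = β • 1 ∧ t * β = s * β := by
  have hleft : ∀ a, F (true, a) (true, a) = F (false, a + 1) (false, a + 1) := by
    intro a
    have h := congr_fun₂ (hF (φ (Finsupp.single ⟨_, _, (C.arrow a).toPath⟩ 1) ⊗ₜ 1))
      (true, a) (false, a + 1)
    rwa [bandRep_arrow_tmul_one, bandRep_arrow_tmul_one, mul_single_apply_same,
      single_mul_apply_same, mul_one, one_mul] at h
  have hright : ∀ a, F (true, -a) (true, -a) * (if a = 0 then t else 1) =
      (if a = 0 then s else 1) * F (false, -a) (false, -a) := by
    intro a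
    have h := congr_fun₂ (hF (1 ⊗ₜ φ (Finsupp.single ⟨_, _, (C.arrow a).toPath⟩ 1)))
      (true, -a) (false, -a)
    rwa [bandRep_one_tmul_arrow, bandRep_one_tmul_arrow, mul_single_apply_same,
      single_mul_apply_same] at h
  set g : ZMod N → k := fun a => F (false, a) (false, a)
  have hg (a) (ha : a ≠ 0) : g (a + 1) = g a := by
    have h := hright (-a)
    simp only [neg_neg, neg_eq_zero, ha, if_false, mul_one, one_mul] at h
    exact (hleft a).symm.trans h
  have hconst := ZMod.apply_eq_apply_one hg
  refine ⟨g 1, ?_, ?_⟩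
  · ext x y
    rcases eq_or_ne x y with rfl | hxy
    · obtain ⟨_ | _, a⟩ := x
      · simpa using hconst a
      · simpa [hleft] using hconst (a + 1)
    · simp [C.apply_eq_zero_of_mul_bandRep_eq φ hφ hker hF hN hxy, hxy]
  · have h := hright 0
    simp only [neg_zero, if_true, hleft, zero_add] at h
    calc t * g 1 = s * g 0 := by rw [mul_comm]; exact h
      _ = s * g 1 := by rw [hconst 0]

omit hF

noncomputable abbrev bandModule (t : k) : ModuleCat (A ⊗[k] A) :=
  matrixModule (C.bandRep φ hφ hker t)

lemma isBrick_bandModule (hN : (1 : ZMod N) ≠ 0) (t : k) :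
    IsBrick (A ⊗[k] A) (C.bandModule φ hφ hker t) :=
  isBrick_matrixModule fun _ hF =>
    (C.exists_eq_smul_one_of_mul_bandRep_eq φ hφ hker hF hN).imp fun _ h => h.1

lemma isEmpty_linearEquiv_bandModule (hN : (1 : ZMod N) ≠ 0) (hts : t ≠ s) :
    IsEmpty (C.bandModule φ hφ hker t ≃ₗ[A ⊗[k] A] C.bandModule φ hφ hker s) := by
  refine isEmpty_linearEquiv_matrixModule fun F hF => ?_
  obtain ⟨β, rfl, hβ⟩ := C.exists_eq_smul_one_of_mul_bandRep_eq φ hφ hker hF hN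
  obtain rfl : β = 0 := by
    by_contra h
    exact hts (mul_right_cancel₀ h hβ)
  exact zero_smul k 1

end Quiver.SimpleCycle

theorem not_isTauTiltingFinite_tensorProduct_of_cycle {k V A : Type} [Field k] [Infinite k]
    [Quiver.{0} V] [Fintype V] [DecidableEq V] [Ring A] [Algebra k A]
    (φ : PathAlgebra k V →ₐ[k] A) (hφ : Function.Surjective φ)
    (hker : ∀ x, φ x = 0 → ∀ P ∈ x.support, 2 ≤ P.2.2.length)
    {a b : V} (hab : a ≠ b) (p : Path a b) (q : Path b a) :
    ¬ IsTauTiltingFinite (TensorProduct k A A) := by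
  obtain ⟨N, hN, ⟨C⟩⟩ := Path.exists_simpleCycle_of_ne hab p q
  have : Fact (1 < N) := ⟨hN⟩
  exact not_isTauTiltingFinite_of_bricks (C.bandModule φ hφ hker)
    (C.isBrick_bandModule φ hφ hker one_ne_zero)
    fun _ _ hts => C.isEmpty_linearEquiv_bandModule φ hφ hker one_ne_zero hts

theorem stmt16 (k A : Type) [Field k] [IsAlgClosed k] [Ring A] [Algebra k A]
    (n : ℕ) (G : Quiver.{0} (Fin n))
    (φ : @PathAlgebra k (Fin n) ‹Field k› G →ₐ[k] A)
    (hpres : @IsAdmissiblePresentation k (Fin n) A ‹Field k› G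
      (inferInstanceAs (Fintype (Fin n))) (inferInstanceAs (DecidableEq (Fin n)))
      ‹Ring A› ‹Algebra k A› φ)
    (a b : Fin n) (hab : a ≠ b)
    (p : @Quiver.Path (Fin n) G a b) (q : @Quiver.Path (Fin n) G b a) :
    ¬ IsTauTiltingFinite (TensorProduct k A A) :=
  not_isTauTiltingFinite_tensorProduct_of_cycle φ hpres.1 hpres.2.1 hab p q
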